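/- Decomposition of the hidden time-reversal generator (Theorem 'delsingle'): the hidden time-reversal generator equals the marginal generator plus the time reversal of the hidden generator taken with respect to the stalling state: W̃ = W_mar + P * (W_hid)ᵀ * P⁻¹ (together with the decomposition W = W_mar + W_hid of the forward generator). -/

import Mathlib

/-!
Tilting changes the generator only on the edge `a – b`, where `Whid` vanishes, so `M Q - Whid` is
the marginal generator with its two off-diagonal rates tilted. Time reversal with respect to `p`
is linear and fixes diagonal entries, and at the effective affinity the tilt exactly compensates
the reversal on the edge: `p a * (W b a * exp Q) / p b = W a b`. Hence the time reversal of
`M Q - Whid` is `W - Whid`, and adding the time reversal of `Whid` gives the theorem.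
-/

open Matrix Real

namespace Matrix

variable {ι K : Type*} [Fintype ι] [DecidableEq ι] [Field K]

noncomputable def timeReversal (p : ι → K) (A : Matrix ι ι K) : Matrix ι ι K :=
  diagonal p * Aᵀ * (diagonal p)⁻¹

theorem inv_diagonal_of_ne_zero {p : ι → K} (hp : ∀ i, p i ≠ 0) :
    (diagonal p)⁻¹ = diagonal p⁻¹ := by
  refine inv_eq_right_inv ?_
  rw [diagonal_mul_diagonal, ← diagonal_one]
  exact congrArg diagonal (funext fun i => mul_inv_cancel₀ (hp i))

theorem timeReversal_apply {p : ι → K} (hp : ∀ i, p i ≠ 0) (A : Matrix ι ι K) (i j : ι) :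
    timeReversal p A i j = p i * A j i / p j := by
  rw [timeReversal, inv_diagonal_of_ne_zero hp, mul_diagonal, diagonal_mul, transpose_apply,
    Pi.inv_apply, div_eq_mul_inv]

theorem timeReversal_sub (p : ι → K) (A B : Matrix ι ι K) :
    timeReversal p (A - B) = timeReversal p A - timeReversal p B := by
  simp only [timeReversal, transpose_sub, mul_sub, sub_mul]

end Matrix

section EffectiveAffinity

variable {w w' r r' : ℝ}

theorem mul_mul_exp_log_div_eq (hw : 0 < w) (hw' : 0 < w') (hr : 0 < r) (hr' : 0 < r') :
    r * (w' * exp (log (w * r' / (w' * r)))) / r' = w := by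
  rw [exp_log (by positivity)]
  field_simp

theorem mul_mul_exp_neg_log_div_eq (hw : 0 < w) (hw' : 0 < w') (hr : 0 < r) (hr' : 0 < r') :
    r' * (w * exp (-log (w * r' / (w' * r)))) / r = w' := by
  rw [exp_neg, exp_log (by positivity)]
  field_simp

end EffectiveAffinity

theorem timeReversal_tilted_sub_hidden {ι : Type*} [Fintype ι] [DecidableEq ι]
    {W Whid M : Matrix ι ι ℝ} {p : ι → ℝ} {a b : ι}
    (hWab : 0 < W a b) (hWba : 0 < W b a) (hp : ∀ i, 0 < p i)
    (hhid_ab : Whid a b = 0) (hhid_ba : Whid b a = 0)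
    (hhid : ∀ i j, ¬(i = a ∧ j = b) → ¬(i = b ∧ j = a) → ¬(i = a ∧ j = a) →
      ¬(i = b ∧ j = b) → Whid i j = W i j)
    (hM_ab : M a b = W a b * exp (-log (W a b * p b / (W b a * p a))))
    (hM_ba : M b a = W b a * exp (log (W a b * p b / (W b a * p a))))
    (hM : ∀ i j, ¬(i = a ∧ j = b) → ¬(i = b ∧ j = a) → M i j = W i j) :
    timeReversal p (M - Whid) = W - Whid := by
  ext i j
  rw [timeReversal_apply (fun i => (hp i).ne'), Matrix.sub_apply, Matrix.sub_apply]
  by_cases hab : i = a ∧ j = b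
  · obtain ⟨rfl, rfl⟩ := hab
    rw [hM_ba, hhid_ab, hhid_ba, sub_zero, sub_zero,
      mul_mul_exp_log_div_eq hWab hWba (hp i) (hp j)]
  by_cases hba : i = b ∧ j = a
  · obtain ⟨rfl, rfl⟩ := hba
    rw [hM_ab, hhid_ab, hhid_ba, sub_zero, sub_zero,
      mul_mul_exp_neg_log_div_eq hWab hWba (hp j) (hp i)]
  have hab' : ¬(j = a ∧ i = b) := fun h => hba ⟨h.2, h.1⟩
  have hba' : ¬(j = b ∧ i = a) := fun h => hab ⟨h.2, h.1⟩
  rw [hM j i hab' hba']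
  by_cases hij : i = j
  · subst hij
    field_simp [(hp i).ne']
  · rw [hhid i j hab hba (fun h => hij (h.1.trans h.2.symm)) (fun h => hij (h.1.trans h.2.symm)),
      hhid j i hab' hba' (fun h => hij (h.2.trans h.1.symm)) (fun h => hij (h.2.trans h.1.symm))]
    simp

theorem hidden_TR_decomposition {n : ℕ}
    (W Whid : Matrix (Fin n) (Fin n) ℝ)
    (a b : Fin n)
    (hWab : 0 < W a b) (hWba : 0 < W b a)
    (hH1 : Whid a b = 0) (hH2 : Whid b a = 0)
    (hH5 : ∀ i j, ¬(i = a ∧ j = b) → ¬(i = b ∧ j = a) → ¬(i = a ∧ j = a) →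
      ¬(i = b ∧ j = b) → Whid i j = W i j)
    (p : Fin n → ℝ) (hp1 : ∀ i, 0 < p i)
    (Q : ℝ) (hQdef : Q = Real.log (W a b * p b / (W b a * p a)))
    (M : ℝ → Matrix (Fin n) (Fin n) ℝ)
    (hM1 : ∀ q, M q a b = W a b * Real.exp (-q))
    (hM2 : ∀ q, M q b a = W b a * Real.exp q)
    (hM3 : ∀ q i j, ¬(i = a ∧ j = b) → ¬(i = b ∧ j = a) → M q i j = W i j) :
    W = (W - Whid) + Whid ∧
    Matrix.diagonal p * (M Q)ᵀ * (Matrix.diagonal p)⁻¹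
      = (W - Whid) + Matrix.diagonal p * Whidᵀ * (Matrix.diagonal p)⁻¹ := by
  refine ⟨(sub_add_cancel W Whid).symm, ?_⟩
  have hreversal : timeReversal p (M Q - Whid) = W - Whid := by
    subst hQdef
    exact timeReversal_tilted_sub_hidden hWab hWba hp1 hH1 hH2 hH5 (hM1 _) (hM2 _) (hM3 _)
  calc timeReversal p (M Q)
      = timeReversal p (M Q - Whid) + timeReversal p Whid := by
        rw [timeReversal_sub, sub_add_cancel]
    _ = (W - Whid) + timeReversal p Whid := by rw [hreversal]
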